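/- arXiv:1309.7442 — 2 statements merged into one kernel-verified Lean document; each statement's English description precedes it below -/
import Mathlib

section
/- Let χ have finite order s, λ a character of G, and f(y) ∈ k[y] a monic irreducible polynomial with f(y) ≠ y. Then the quotient module V(λ, f) = M(λ)/(f(x^s)·M(λ)) is a simple H-module of dimension s·deg(f). -/
set_option linter.unusedSectionVars false

open scoped TensorProduct

/-- The Hopf–Ore extension `H = kG(χ⁻¹, a, 0)` of a group algebra `kG`:
`H` is generated by (the image of) `G` and `x` with relation `x g = χ⁻¹(g) g x`,
`a` is central in `G` with `χ(a) ≠ 1`, and the elements `g x^i` form a `k`-basis. -/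
structure HopfOreExt (k G H : Type*) [Field k] [Group G] [Ring H] [Algebra k H] where
  ι : G →* H
  x : H
  a : G
  χ : G →* kˣ
  ha_central : ∀ g : G, a * g = g * a
  hχa : (χ a : k) ≠ 1
  rel : ∀ g : G, x * ι g = (χ g : k)⁻¹ • (ι g * x)
  bas : Module.Basis (G × ℕ) k H
  bas_eq : ∀ p : G × ℕ, bas p = ι p.1 * x ^ p.2

variable {k G H : Type*} [Field k] [Group G] [Ring H] [Algebra k H]

/-- A module is a weight module iff it is spanned by weight vectors. -/
def IsWeightModule (D : HopfOreExt k G H) (M : Type*) [AddCommGroup M] [Module k M]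
    [Module H M] [IsScalarTower k H M] : Prop :=
  Submodule.span k {v : M | ∃ lam : G →* kˣ, ∀ g : G, D.ι g • v = (lam g : k) • v} = ⊤

namespace VermaAux

open Polynomial

lemma ksmul_comm {M : Type*} [AddCommGroup M] [Module k M] [Module H M]
    [IsScalarTower k H M] (c : k) (h : H) (m : M) :
    h • (c • m) = c • (h • m) := by
  rw [← algebraMap_smul H c m, ← algebraMap_smul H c (h • m), smul_smul, smul_smul,
    Algebra.commutes]

variable {D : HopfOreExt k G H}

lemma iota_mul_x (g : G) : D.ι g * D.x = (D.χ g : k) • (D.x * D.ι g) := by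
  rw [D.rel g, smul_smul, mul_inv_cancel₀ (Units.ne_zero (D.χ g)), one_smul]

lemma iota_mul_x_pow (g : G) (i : ℕ) :
    D.ι g * D.x ^ i = ((D.χ g : k) ^ i) • (D.x ^ i * D.ι g) := by
  induction i with
  | zero => simp
  | succ n ih =>
    rw [pow_succ, ← mul_assoc, ih, smul_mul_assoc, mul_assoc, iota_mul_x, mul_smul_comm,
      smul_smul, ← pow_succ, ← mul_assoc]

lemma chi_pow_s {s : ℕ} (hs : orderOf D.χ = s) (g : G) : (D.χ g : k) ^ s = 1 := by
  have h : D.χ ^ s = 1 := by rw [← hs]; exact pow_orderOf_eq_one D.χ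
  have h2 : (D.χ g) ^ s = 1 := by
    simpa using congrFun (congrArg DFunLike.coe h) g
  simpa using congrArg Units.val h2

lemma commute_aeval {z w : H} (h : Commute w z) (p : Polynomial k) :
    Commute (Polynomial.aeval w p) z := by
  induction p using Polynomial.induction_on' with
  | add p q hp hq => rw [map_add]; exact hp.add_left hq
  | monomial n a =>
    rw [Polynomial.aeval_monomial]
    exact (Algebra.commute_algebraMap_left a z).mul_left (h.pow_left n)

lemma iota_comm_xs {s : ℕ} (hs : orderOf D.χ = s) (g : G) :
    Commute (D.x ^ s) (D.ι g) := by
  have := iota_mul_x_pow (D := D) g s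
  rw [chi_pow_s hs, one_smul] at this
  exact this.symm

lemma T_central {s : ℕ} (hs : orderOf D.χ = s) (f : Polynomial k) (h : H) :
    Commute (Polynomial.aeval (D.x ^ s) f) h := by
  have hb : h ∈ Submodule.span k (Set.range D.bas) := by
    rw [D.bas.span_eq]; trivial
  induction hb using Submodule.span_induction with
  | mem y hy =>
    obtain ⟨p, rfl⟩ := hy
    rw [D.bas_eq]
    exact (commute_aeval (iota_comm_xs hs p.1) f).mul_right
      (commute_aeval ((Commute.refl D.x).pow_pow s p.2) f)
  | zero => exact Commute.zero_right _
  | add y z _ _ hy hz => exact hy.add_right hz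
  | smul c y _ hy => exact hy.smul_right c

end VermaAux

namespace VermaAux

open Polynomial

variable {D : HopfOreExt k G H}

section ModuleM

variable {M : Type*} [AddCommGroup M] [Module k M] [Module H M] [IsScalarTower k H M]

/-- The `k`-linear identification of the Verma module with `k[X]`. -/
noncomputable def eM (b : Module.Basis ℕ k M) : M ≃ₗ[k] Polynomial k :=
  b.equiv (Polynomial.basisMonomials k) (Equiv.refl ℕ)

lemma eM_apply_b (b : Module.Basis ℕ k M) (i : ℕ) : eM b (b i) = monomial i 1 := by
  rw [eM, Module.Basis.equiv_apply]
  show (Polynomial.basisMonomials k) i = _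
  rw [show ((Polynomial.basisMonomials k) i) = monomial i 1 from
    congrFun (Polynomial.coe_basisMonomials k) i]

lemma eM_symm_monomial (b : Module.Basis ℕ k M) (i : ℕ) (a : k) :
    (eM b).symm (monomial i a) = a • b i := by
  have h1 : (monomial i a : Polynomial k) = a • monomial i 1 := by
    rw [smul_monomial, smul_eq_mul, mul_one]
  rw [h1, map_smul]
  congr 1
  rw [← eM_apply_b b i, LinearEquiv.symm_apply_apply]

variable {b : Module.Basis ℕ k M} {v : M} {lam : G →* kˣ}

lemma x_smul_b (hb : ∀ i : ℕ, b i = D.x ^ i • v) (i : ℕ) :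
    D.x • b i = b (i + 1) := by
  rw [hb i, hb (i + 1), smul_smul, pow_succ']

lemma psi_X_mul (hb : ∀ i : ℕ, b i = D.x ^ i • v) (q : Polynomial k) :
    (eM b).symm (X * q) = D.x • (eM b).symm q := by
  induction q using Polynomial.induction_on' with
  | add p q hp hq => rw [mul_add, map_add, map_add, smul_add, hp, hq]
  | monomial n a =>
    rw [X_mul_monomial, eM_symm_monomial, eM_symm_monomial, ksmul_comm, x_smul_b hb]

lemma psi_X_pow_mul (hb : ∀ i : ℕ, b i = D.x ^ i • v) (n : ℕ) (q : Polynomial k) :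
    (eM b).symm (X ^ n * q) = D.x ^ n • (eM b).symm q := by
  induction n with
  | zero => simp
  | succ m ih =>
    rw [pow_succ', mul_assoc, psi_X_mul hb, ih, smul_smul, ← pow_succ']

lemma psi_mul (hb : ∀ i : ℕ, b i = D.x ^ i • v) (β q : Polynomial k) :
    (eM b).symm (β * q) = Polynomial.aeval D.x β • (eM b).symm q := by
  induction β using Polynomial.induction_on' with
  | add p q' hp hq =>
    rw [add_mul, map_add, map_add, add_smul, hp, hq]
  | monomial n a =>
    rw [Polynomial.aeval_monomial, mul_smul, algebraMap_smul, ← psi_X_pow_mul hb,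
      ← map_smul, smul_eq_C_mul, ← mul_assoc, C_mul_X_pow_eq_monomial]

lemma iota_smul_b (hb : ∀ i : ℕ, b i = D.x ^ i • v)
    (hg : ∀ g : G, D.ι g • v = (lam g : k) • v) (g : G) (i : ℕ) :
    D.ι g • b i = (((D.χ g : k)) ^ i * (lam g : k)) • b i := by
  rw [hb i, smul_smul, iota_mul_x_pow, smul_assoc, mul_smul, hg, ksmul_comm, smul_smul]

lemma psi_group (hb : ∀ i : ℕ, b i = D.x ^ i • v)
    (hg : ∀ g : G, D.ι g • v = (lam g : k) • v) (g : G) (q : Polynomial k) :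
    D.ι g • (eM b).symm q
      = (lam g : k) • (eM b).symm (Polynomial.aeval (C (D.χ g : k) * X) q) := by
  induction q using Polynomial.induction_on' with
  | add p q' hp hq => rw [map_add, map_add, map_add, smul_add, smul_add, hp, hq]
  | monomial n a =>
    rw [eM_symm_monomial, ksmul_comm, iota_smul_b hb hg, Polynomial.aeval_monomial,
      Polynomial.algebraMap_eq, mul_pow, ← C_pow, ← mul_assoc, ← map_mul,
      C_mul_X_pow_eq_monomial, eM_symm_monomial, smul_smul, smul_smul]
    congr 1
    ring

lemma coeff_scale (ε : k) (q : Polynomial k) (i : ℕ) :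
    (Polynomial.aeval (C ε * X) q).coeff i = ε ^ i * q.coeff i := by
  induction q using Polynomial.induction_on' with
  | add p q' hp hq => rw [map_add, coeff_add, coeff_add, mul_add, hp, hq]
  | monomial n a =>
    rw [Polynomial.aeval_monomial, Polynomial.algebraMap_eq, mul_pow, ← C_pow, ← mul_assoc,
      ← map_mul, C_mul_X_pow_eq_monomial, coeff_monomial, coeff_monomial]
    split
    · next h => subst h; ring
    · ring

end ModuleM

end VermaAux

namespace VermaAux

open Polynomial

variable {D : HopfOreExt k G H}

section ModuleM

variable {M : Type*} [AddCommGroup M] [Module k M] [Module H M] [IsScalarTower k H M]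
variable {b : Module.Basis ℕ k M} {v : M}

lemma mem_spanN_iff {s : ℕ} (hs : orderOf D.χ = s) (f : Polynomial k) (m : M) :
    m ∈ Submodule.span H {m : M | ∃ u : M, m = Polynomial.aeval (D.x ^ s) f • u}
      ↔ ∃ u : M, m = Polynomial.aeval (D.x ^ s) f • u := by
  constructor
  · intro hm
    induction hm using Submodule.span_induction with
    | mem y hy => exact hy
    | zero => exact ⟨0, (smul_zero _).symm⟩
    | add y z _ _ hy hz =>
      obtain ⟨u1, rfl⟩ := hy; obtain ⟨u2, rfl⟩ := hz
      exact ⟨u1 + u2, (smul_add _ _ _).symm⟩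
    | smul h y _ hy =>
      obtain ⟨u, rfl⟩ := hy
      refine ⟨h • u, ?_⟩
      rw [smul_smul, smul_smul, (T_central hs f h).eq]
  · exact fun h => Submodule.subset_span h

lemma mem_N_iff_dvd {s : ℕ} (hb : ∀ i : ℕ, b i = D.x ^ i • v) (f : Polynomial k) (m : M) :
    (∃ u : M, m = Polynomial.aeval (D.x ^ s) f • u) ↔ expand k s f ∣ eM b m := by
  have hTF : (Polynomial.aeval (D.x ^ s) f : H) = Polynomial.aeval D.x (expand k s f) :=
    (Polynomial.expand_aeval s f D.x).symm
  constructor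
  · rintro ⟨u, rfl⟩
    have h1 : Polynomial.aeval (D.x ^ s) f • u = (eM b).symm (expand k s f * eM b u) := by
      rw [psi_mul hb, (eM b).symm_apply_apply, hTF]
    rw [h1, (eM b).apply_symm_apply]
    exact Dvd.intro _ rfl
  · rintro ⟨q, hq⟩
    refine ⟨(eM b).symm q, ?_⟩
    rw [hTF, ← psi_mul hb, ← hq, (eM b).symm_apply_apply]

end ModuleM

lemma f_natDegree_pos {f : Polynomial k} (hmonic : f.Monic) (hirr : Irreducible f) :
    0 < f.natDegree := by
  by_contra hc
  have h0 : f.natDegree = 0 := Nat.eq_zero_of_not_pos hc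
  have hf : f = C (f.coeff 0) := eq_C_of_natDegree_eq_zero h0
  have h1 : f.coeff 0 = 1 := by
    have hm := hmonic.leadingCoeff
    rwa [leadingCoeff, h0] at hm
  exact hirr.not_isUnit (by rw [hf, h1, map_one]; exact isUnit_one)

lemma f_eval_zero_ne {f : Polynomial k} (hmonic : f.Monic) (hirr : Irreducible f)
    (hfX : f ≠ X) : f.eval 0 ≠ 0 := by
  intro h0
  have hXdvd : X ∣ f := by rwa [X_dvd_iff, coeff_zero_eq_eval_zero]
  obtain ⟨t, ht⟩ := hXdvd
  rcases hirr.isUnit_or_isUnit ht with hu | hu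
  · exact not_isUnit_X hu
  · obtain ⟨u, _, hu2⟩ := Polynomial.isUnit_iff.mp hu
    have hf : f = monomial 1 u := by rw [ht, ← hu2, mul_comm, C_mul_X_eq_monomial]
    have hu1 : u = 1 := by
      have hm := hmonic.leadingCoeff
      rwa [hf, leadingCoeff_monomial] at hm
    exact hfX (by rw [hf, hu1, monomial_one_one_eq_X])

end VermaAux

namespace VermaAux

open Polynomial

variable {D : HopfOreExt k G H}

section Main

variable {M : Type*} [AddCommGroup M] [Module k M] [Module H M] [IsScalarTower k H M]

lemma dim_part {s : ℕ} (hs : orderOf D.χ = s) (hs0 : 0 < s)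
    {f : Polynomial k} (hmonic : f.Monic) (hirr : Irreducible f)
    (b : Module.Basis ℕ k M) {v : M} (hb : ∀ i : ℕ, b i = D.x ^ i • v) :
    Module.finrank k
      (M ⧸ (Submodule.span H {m : M | ∃ u : M, m = Polynomial.aeval (D.x ^ s) f • u}))
        = s * f.natDegree := by
  set F := expand k s f with hFdef
  set N := Submodule.span H {m : M | ∃ u : M, m = Polynomial.aeval (D.x ^ s) f • u} with hNdef
  have hmemN : ∀ m : M, m ∈ N ↔ F ∣ eM b m := fun m =>
    (mem_spanN_iff hs f m).trans (mem_N_iff_dvd hb f m)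
  have hF0 : F ≠ 0 := fun h => by
    have h1 : F.natDegree = f.natDegree * s := natDegree_expand s f
    rw [h, natDegree_zero] at h1
    exact absurd h1.symm (Nat.mul_pos (f_natDegree_pos hmonic hirr) hs0).ne'
  let φ : Polynomial k →ₗ[k] (M ⧸ N) :=
    (LinearMap.restrictScalars k N.mkQ).comp ((eM b).symm.toLinearMap)
  have hφsurj : Function.Surjective φ := by
    intro q
    obtain ⟨m, hm⟩ := N.mkQ_surjective q
    refine ⟨eM b m, ?_⟩
    show N.mkQ ((eM b).symm (eM b m)) = q
    rw [(eM b).symm_apply_apply, hm]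
  have hφker : LinearMap.ker φ
      = Submodule.restrictScalars k (Ideal.span {F} : Ideal (Polynomial k)) := by
    ext q
    simp only [LinearMap.mem_ker, Submodule.restrictScalars_mem]
    rw [Ideal.mem_span_singleton]
    show N.mkQ ((eM b).symm q) = 0 ↔ _
    rw [Submodule.mkQ_apply, Submodule.Quotient.mk_eq_zero, hmemN, (eM b).apply_symm_apply]
  have h1 : Module.finrank k (M ⧸ N)
      = Module.finrank k (Polynomial k ⧸ LinearMap.ker φ) :=
    (φ.quotKerEquivOfSurjective hφsurj).symm.finrank_eq
  have h2 : Module.finrank k (Polynomial k ⧸ LinearMap.ker φ)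
      = Module.finrank k (AdjoinRoot F) := by
    rw [hφker]
    exact (Submodule.Quotient.restrictScalarsEquiv k
      (Ideal.span {F} : Ideal (Polynomial k))).finrank_eq
  have h3 : Module.finrank k (AdjoinRoot F) = F.natDegree := by
    rw [(AdjoinRoot.powerBasis hF0).finrank]; rfl
  rw [h1, h2, h3, hFdef, natDegree_expand, Nat.mul_comm]

end Main

end VermaAux

namespace VermaAux

open Polynomial

variable {D : HopfOreExt k G H}

section Simple

variable {M : Type*} [AddCommGroup M] [Module k M] [Module H M] [IsScalarTower k H M]

lemma simple_part {s : ℕ} (hs : orderOf D.χ = s) (hs0 : 0 < s)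
    (lam : G →* kˣ) {f : Polynomial k} (hmonic : f.Monic) (hirr : Irreducible f)
    (hfX : f ≠ X)
    (b : Module.Basis ℕ k M) {v : M} (hv : v = b 0)
    (hb : ∀ i : ℕ, b i = D.x ^ i • v)
    (hg : ∀ g : G, D.ι g • v = (lam g : k) • v) :
    IsSimpleModule H
      (M ⧸ (Submodule.span H {m : M | ∃ u : M, m = Polynomial.aeval (D.x ^ s) f • u})) := by
  classical
  set F := expand k s f with hFdef
  set N := Submodule.span H {m : M | ∃ u : M, m = Polynomial.aeval (D.x ^ s) f • u} with hNdef
  have hmemN : ∀ m : M, m ∈ N ↔ F ∣ eM b m := fun m =>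
    (mem_spanN_iff hs f m).trans (mem_N_iff_dvd hb f m)
  have hfdeg := f_natDegree_pos hmonic hirr
  have hFdeg : F.natDegree = f.natDegree * s := natDegree_expand s f
  have hF0 : F ≠ 0 := fun h => by
    rw [h, natDegree_zero] at hFdeg
    exact absurd hFdeg.symm (Nat.mul_pos hfdeg hs0).ne'
  have hFnotunit : ¬ IsUnit F := fun h => by
    have h2 := natDegree_eq_zero_of_isUnit h
    rw [hFdeg] at h2
    exact (Nat.mul_pos hfdeg hs0).ne' h2
  have hf0 := f_eval_zero_ne hmonic hirr hfX
  have hπv : N.mkQ v ≠ 0 := by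
    rw [Submodule.mkQ_apply, Ne, Submodule.Quotient.mk_eq_zero, hmemN, hv, eM_apply_b,
      monomial_zero_one]
    intro hdvd
    exact hFnotunit (isUnit_of_dvd_one hdvd)
  have key : ∀ W : Submodule H (M ⧸ N), W ≠ ⊥ → W = ⊤ := by
    intro W hW
    obtain ⟨w, hwW, hw0⟩ := (Submodule.ne_bot_iff W).mp hW
    have hWk : ∀ (c : k) (q : M ⧸ N), q ∈ W → c • q ∈ W := by
      intro c q hq
      rw [← algebraMap_smul H c q]
      exact W.smul_mem _ hq
    let J : Ideal (Polynomial k) :=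
      { carrier := {q | N.mkQ ((eM b).symm q) ∈ W}
        add_mem' := fun {p q} hp hq => by
          simp only [Set.mem_setOf_eq, map_add] at *
          exact W.add_mem hp hq
        zero_mem' := by
          simp only [Set.mem_setOf_eq, map_zero]
          exact W.zero_mem
        smul_mem' := fun c q hq => by
          simp only [Set.mem_setOf_eq, smul_eq_mul] at *
          rw [psi_mul hb, map_smul]
          exact W.smul_mem _ hq }
    have hJiff : ∀ q : Polynomial k, q ∈ J ↔ N.mkQ ((eM b).symm q) ∈ W := fun q => Iff.rfl
    have hJF : F ∈ J := by
      rw [hJiff]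
      have hFN : (eM b).symm F ∈ N := by rw [hmemN, (eM b).apply_symm_apply]
      rw [Submodule.mkQ_apply, (Submodule.Quotient.mk_eq_zero N).mpr hFN]
      exact W.zero_mem
    obtain ⟨m, hm⟩ := N.mkQ_surjective w
    have hJp : eM b m ∈ J := by
      rw [hJiff, (eM b).symm_apply_apply, hm]
      exact hwW
    have hpnd : ¬ F ∣ eM b m := by
      intro hdvd
      rw [← hmemN] at hdvd
      rw [← hm, Submodule.mkQ_apply, (Submodule.Quotient.mk_eq_zero N).mpr hdvd] at hw0
      exact hw0 rfl
    have hJσ : ∀ (g : G) (q : Polynomial k), q ∈ J →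
        Polynomial.aeval (C (D.χ g : k) * X) q ∈ J := by
      intro g q hq
      rw [hJiff] at hq ⊢
      have h5 : N.mkQ (D.ι g • (eM b).symm q)
          = (lam g : k) • N.mkQ ((eM b).symm (Polynomial.aeval (C (D.χ g : k) * X) q)) := by
        rw [psi_group hb hg, ← algebraMap_smul H ((lam g : k)), map_smul, algebraMap_smul]
      have h6 : N.mkQ (D.ι g • (eM b).symm q) ∈ W := by
        rw [map_smul]
        exact W.smul_mem _ hq
      rw [h5] at h6
      have h7 := hWk ((lam g : k))⁻¹ _ h6
      rwa [smul_smul, inv_mul_cancel₀ (Units.ne_zero (lam g)), one_smul] at h7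
    haveI hJprin : J.IsPrincipal := IsPrincipalIdealRing.principal J
    set d := Submodule.IsPrincipal.generator J with hdgen
    have hJspan : Ideal.span {d} = J := Ideal.span_singleton_generator J
    have hmemJ : ∀ q : Polynomial k, q ∈ J ↔ d ∣ q := by
      intro q; rw [← hJspan, Ideal.mem_span_singleton]
    have hd0 : d ≠ 0 := by
      intro h
      have h2 := (hmemJ F).mp hJF
      rw [h, zero_dvd_iff] at h2
      exact hF0 h2
    have hsupp : d.support.Nonempty := Polynomial.support_nonempty.mpr hd0
    set r := d.support.min' hsupp with hr
    have hrmem : r ∈ d.support := d.support.min'_mem hsupp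
    have hcoeffs : ∀ (g : G), ∀ i ∈ d.support, ∀ j ∈ d.support,
        (D.χ g : k) ^ i = (D.χ g : k) ^ j := by
      intro g
      have hσd : Polynomial.aeval (C (D.χ g : k) * X) d ∈ J := hJσ g d ((hmemJ d).mpr dvd_rfl)
      obtain ⟨t, ht⟩ := (hmemJ _).mp hσd
      have hεne : (D.χ g : k) ≠ 0 := Units.ne_zero _
      have hσne : Polynomial.aeval (C (D.χ g : k) * X) d ≠ 0 := by
        intro h
        have h2 := coeff_scale (D.χ g : k) d d.natDegree
        rw [h, coeff_zero] at h2
        have hld : d.coeff d.natDegree = 0 := by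
          rcases mul_eq_zero.mp h2.symm with h3 | h3
          · exact absurd h3 (pow_ne_zero _ hεne)
          · exact h3
        exact hd0 (leadingCoeff_eq_zero.mp hld)
      have ht0 : t ≠ 0 := by
        rintro rfl
        rw [mul_zero] at ht
        exact hσne ht
      have hdegle : (Polynomial.aeval (C (D.χ g : k) * X) d).natDegree ≤ d.natDegree := by
        apply natDegree_le_iff_coeff_eq_zero.mpr
        intro N hN
        rw [coeff_scale, coeff_eq_zero_of_natDegree_lt hN, mul_zero]
      have hdegt : t.natDegree = 0 := by
        have h2 := natDegree_mul hd0 ht0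
        rw [← ht] at h2
        omega
      have hc : t = C (t.coeff 0) := eq_C_of_natDegree_eq_zero hdegt
      have hcoeff2 : ∀ i, (D.χ g : k) ^ i * d.coeff i = d.coeff i * t.coeff 0 := by
        intro i
        rw [← coeff_scale, ht, hc, coeff_mul_C, coeff_C_zero]
      intro i hi j hj
      have hci : (D.χ g : k) ^ i = t.coeff 0 := by
        have h2 := hcoeff2 i
        rw [mul_comm ((D.χ g : k) ^ i)] at h2
        exact mul_left_cancel₀ (mem_support_iff.mp hi) h2
      have hcj : (D.χ g : k) ^ j = t.coeff 0 := by
        have h2 := hcoeff2 j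
        rw [mul_comm ((D.χ g : k) ^ j)] at h2
        exact mul_left_cancel₀ (mem_support_iff.mp hj) h2
      rw [hci, hcj]
    have hdiv : ∀ i ∈ d.support, r ≤ i ∧ s ∣ i - r := by
      intro i hi
      have hri : r ≤ i := d.support.min'_le i hi
      refine ⟨hri, ?_⟩
      have hpow : D.χ ^ (i - r) = 1 := by
        ext g
        have h1 : (D.χ g : k) ^ i = (D.χ g : k) ^ r := hcoeffs g i hi r hrmem
        have h2 : (D.χ g) ^ i = (D.χ g) ^ r := Units.ext (by simpa using h1)
        have h3 : (D.χ g) ^ (i - r) * (D.χ g) ^ r = 1 * (D.χ g) ^ r := by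
          rw [← pow_add, Nat.sub_add_cancel hri, h2, one_mul]
        have h4 := mul_right_cancel h3
        simpa using congrArg Units.val h4
      have h5 := orderOf_dvd_of_pow_eq_one (x := D.χ) (by exact hpow)
      rwa [hs] at h5
    set Epoly := ∑ i ∈ d.support, C (d.coeff i) * X ^ ((i - r) / s) with hEpoly
    have hdE : d = X ^ r * expand k s Epoly := by
      rw [hEpoly, map_sum, Finset.mul_sum]
      conv_lhs => rw [d.as_sum_support]
      apply Finset.sum_congr rfl
      intro i hi
      obtain ⟨hri, hdvd⟩ := hdiv i hi
      rw [map_mul, expand_C, map_pow, expand_X, ← pow_mul, Nat.mul_div_cancel' hdvd,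
        mul_left_comm, ← pow_add, Nat.add_sub_cancel' hri, C_mul_X_pow_eq_monomial]
    have h1J : (1 : Polynomial k) ∈ J := by
      rcases Nat.eq_zero_or_pos r with hr0 | hrpos
      · have hdE0 : d = expand k s Epoly := by
          rw [hdE, hr0, pow_zero, one_mul]
        by_cases hfE : f ∣ Epoly
        · exfalso
          have hFd : F ∣ d := by
            rw [hdE0]
            exact _root_.map_dvd (expand k s) hfE
          exact hpnd (dvd_trans hFd ((hmemJ _).mp hJp))
        · have hcop : IsCoprime f Epoly := (hirr.coprime_iff_not_dvd).mpr hfE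
          have hcop2 : IsCoprime F d := by
            rw [hdE0]
            simpa using hcop.map (expand k s).toRingHom
          have hdunit : IsUnit d := hcop2.isUnit_of_dvd' ((hmemJ F).mp hJF) dvd_rfl
          have htop : Ideal.span {d} = ⊤ := Ideal.span_singleton_eq_top.mpr hdunit
          rw [← hJspan, htop]
          trivial
      · exfalso
        have hdF : d ∣ F := (hmemJ F).mp hJF
        have hdeval : d.eval 0 = 0 := by
          rw [hdE, eval_mul, eval_pow, eval_X, zero_pow hrpos.ne', zero_mul]
        have hFeval : F.eval 0 ≠ 0 := by
          rw [hFdef, expand_eval, zero_pow hs0.ne']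
          exact hf0
        obtain ⟨t', ht'⟩ := hdF
        exact hFeval (by rw [ht', eval_mul, hdeval, zero_mul])
    have hvW : N.mkQ v ∈ W := by
      have h2 := (hJiff 1).mp h1J
      have h3 : (eM b).symm (1 : Polynomial k) = v := by
        rw [← monomial_zero_one, eM_symm_monomial, one_smul, hv]
      rwa [h3] at h2
    rw [eq_top_iff]
    rintro q -
    obtain ⟨m', rfl⟩ := N.mkQ_surjective q
    have hm' : m' ∈ Submodule.span k (Set.range b) := by rw [b.span_eq]; trivial
    induction hm' using Submodule.span_induction with
    | mem y hy =>
      obtain ⟨i, rfl⟩ := hy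
      have h2 : N.mkQ (b i) = D.x ^ i • N.mkQ v := by rw [hb i, map_smul]
      rw [h2]
      exact W.smul_mem _ hvW
    | zero => rw [map_zero]; exact W.zero_mem
    | add y z _ _ hy hz => rw [map_add]; exact W.add_mem hy hz
    | smul c y _ hy =>
      rw [← algebraMap_smul H c y, map_smul]
      exact W.smul_mem _ hy
  have hbt : (⊥ : Submodule H (M ⧸ N)) ≠ ⊤ := by
    intro h
    have h2 : N.mkQ v ∈ (⊥ : Submodule H (M ⧸ N)) := by rw [h]; trivial
    exact hπv (by simpa using h2)
  haveI : Nontrivial (Submodule H (M ⧸ N)) := ⟨⊥, ⊤, hbt⟩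
  exact { toIsSimpleOrder := ⟨fun W => or_iff_not_imp_left.mpr (key W)⟩ }

end Simple

end VermaAux


/-- Let `|χ| = s < ∞`, `λ` a character, and `f ≠ y` a monic irreducible polynomial of
degree `n ≥ 1`.  Then the quotient `V(λ,f) = M(λ)/(f(x^s)·M(λ))` of the Verma module
`M(λ)` is a simple `H`-module of dimension `s * n`. -/
theorem verma_quotient_simple (D : HopfOreExt k G H) (s : ℕ)
    (hs : orderOf D.χ = s) (hs0 : 0 < s)
    (lam : G →* kˣ) (f : Polynomial k) (hmonic : f.Monic) (hirr : Irreducible f)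
    (hfX : f ≠ Polynomial.X)
    (M : Type*) [AddCommGroup M] [Module k M] [Module H M] [IsScalarTower k H M]
    (b : Module.Basis ℕ k M) (v : M) (hv : v = b 0)
    (hb : ∀ i : ℕ, b i = D.x ^ i • v)
    (hg : ∀ g : G, D.ι g • v = (lam g : k) • v) :
    IsSimpleModule H
      (M ⧸ (Submodule.span H
        {m : M | ∃ u : M, m = Polynomial.aeval (D.x ^ s) f • u})) ∧
    Module.finrank k
      (M ⧸ (Submodule.span H
        {m : M | ∃ u : M, m = Polynomial.aeval (D.x ^ s) f • u})) = s * f.natDegree := by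
  exact ⟨VermaAux.simple_part hs hs0 lam hmonic hirr hfX b hv hb hg,
         VermaAux.dim_part hs hs0 hmonic hirr b hb⟩
end

section
/- Assume χ has finite order s. For characters λ₁, λ₂ of G and monic irreducible polynomials f₁, f₂ ∈ k[y] with f_i ≠ y, V(λ₁, f₁) ≅ V(λ₂, f₂) as H-modules if and only if λ₁λ₂⁻¹ ∈ ⟨χ⟩ and f₁ = f₂. -/
open scoped TensorProduct

variable {k G H : Type*} [Field k] [Group G] [Ring H] [Algebra k H]

/-- `M` realizes the module `V(λ, f) = M(λ)/(f(x^s)·M(λ))`, where `f = y^n - Σ α_j y^j`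
is monic of degree `n`: it has a `k`-basis `m_0, …, m_{ns-1}` with
`g • m_i = χ(g)^i λ(g) • m_i`, `x • m_i = m_{i+1}` for `i < ns - 1`, and
`x • m_{ns-1} = Σ_j α_j • m_{js}`. -/
def IsVLamF (D : HopfOreExt k G H) (lam : G →* kˣ) (s : ℕ) (f : Polynomial k)
    (M : Type*) [AddCommGroup M] [Module k M] [Module H M] [IsScalarTower k H M] : Prop :=
  ∃ (b : Module.Basis (Fin (f.natDegree * s)) k M) (m : ℕ → M),
    (∀ i : Fin (f.natDegree * s), m (i : ℕ) = b i) ∧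
    (∀ i < f.natDegree * s, ∀ g : G,
      D.ι g • m i = ((D.χ g : k) ^ i * (lam g : k)) • m i) ∧
    (∀ i : ℕ, i + 1 < f.natDegree * s → D.x • m i = m (i + 1)) ∧
    D.x • m (f.natDegree * s - 1)
      = ∑ j ∈ Finset.range f.natDegree, (-(f.coeff j)) • m (j * s)

section Aux

variable {M : Type*} [AddCommGroup M] [Module k M] [Module H M] [IsScalarTower k H M]

variable (k) in
/-- Scalar multiplication by an element of `H`, as a `k`-linear map. -/
def hsm (h : H) : M →ₗ[k] M where
  toFun v := h • v
  map_add' := smul_add h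
  map_smul' c v := (smul_comm c h v).symm

@[simp] theorem hsm_apply (h : H) (v : M) : hsm k (M := M) h v = h • v := rfl

theorem hsm_pow_apply (y : H) (t : ℕ) (v : M) :
    ((hsm k (M := M) y) ^ t) v = y ^ t • v := by
  induction t generalizing v with
  | zero => simp
  | succ t ih =>
    rw [pow_succ, Module.End.mul_apply, hsm_apply, ih, ← mul_smul, ← pow_succ]

theorem pow_smul_comm (y : H) (a b : ℕ) (v : M) :
    y ^ a • y ^ b • v = y ^ b • y ^ a • v := by
  rw [← mul_smul, ← mul_smul, pow_mul_comm]

variable (D : HopfOreExt k G H)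

theorem iota_mul_x (g : G) : D.ι g * D.x = (D.χ g : k) • (D.x * D.ι g) := by
  rw [D.rel g, smul_smul, mul_inv_cancel₀ (D.χ g).ne_zero, one_smul]

theorem iota_mul_pow (g : G) (j : ℕ) :
    D.ι g * D.x ^ j = ((D.χ g : k) ^ j) • (D.x ^ j * D.ι g) := by
  induction j with
  | zero => simp
  | succ j ih =>
    rw [pow_succ, ← mul_assoc, ih, smul_mul_assoc, mul_assoc, iota_mul_x D g,
      mul_smul_comm, smul_smul]
    rw [show (D.χ g : k) ^ j * (D.χ g : k) = (D.χ g : k) ^ (j + 1) from (pow_succ _ _).symm,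
      ← mul_assoc, ← pow_succ]

theorem m_pow_smul {N : ℕ} (m : ℕ → M)
    (hx : ∀ i : ℕ, i + 1 < N → D.x • m i = m (i + 1)) :
    ∀ i < N, D.x ^ i • m 0 = m i := by
  intro i
  induction i with
  | zero => intro _; simp
  | succ i ih =>
    intro hi
    rw [pow_succ', mul_smul, ih (lt_trans (Nat.lt_succ_self i) hi), hx i hi]

theorem m_xN {n s N : ℕ} (hN : 0 < N) (hjs : ∀ j < n, j * s < N) (m : ℕ → M) (α : ℕ → k)
    (hx : ∀ i : ℕ, i + 1 < N → D.x • m i = m (i + 1))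
    (hlast : D.x • m (N - 1) = ∑ j ∈ Finset.range n, α j • m (j * s)) :
    D.x ^ N • m 0 = ∑ j ∈ Finset.range n, α j • (D.x ^ (j * s) • m 0) := by
  have h1 : D.x ^ N • m 0 = D.x • m (N - 1) := by
    conv_lhs => rw [show N = N - 1 + 1 from by omega]
    rw [pow_succ', mul_smul, m_pow_smul D m hx (N - 1) (Nat.pred_lt hN.ne')]
  rw [h1, hlast]
  exact Finset.sum_congr rfl fun j hj => by
    rw [m_pow_smul D m hx (j * s) (hjs j (Finset.mem_range.mp hj))]

theorem m_xN_all {n s N : ℕ} (hN : 0 < N) (hjs : ∀ j < n, j * s < N)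
    (b : Module.Basis (Fin N) k M) (m : ℕ → M) (α : ℕ → k)
    (hb : ∀ i : Fin N, m (i : ℕ) = b i)
    (hx : ∀ i : ℕ, i + 1 < N → D.x • m i = m (i + 1))
    (hlast : D.x • m (N - 1) = ∑ j ∈ Finset.range n, α j • m (j * s)) :
    ∀ v : M, D.x ^ N • v = ∑ j ∈ Finset.range n, α j • (D.x ^ (j * s) • v) := by
  have key : (hsm k (M := M) (D.x ^ N))
      = ∑ j ∈ Finset.range n, α j • hsm k (D.x ^ (j * s)) := by
    apply b.ext
    intro i
    have hbi : (b i : M) = D.x ^ (i : ℕ) • m 0 := by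
      rw [← hb i, m_pow_smul D m hx (i : ℕ) i.isLt]
    simp only [hsm_apply, LinearMap.sum_apply, LinearMap.smul_apply, hbi]
    rw [pow_smul_comm, m_xN D hN hjs m α hx hlast, Finset.smul_sum]
    exact Finset.sum_congr rfl fun j hj => by rw [smul_comm, pow_smul_comm]
  intro v
  have := LinearMap.congr_fun key v
  simpa using this

theorem x_smul_surjective {n s N : ℕ} (hn : 0 < n) (hs0 : 0 < s) (hN : N = n * s)
    (b : Module.Basis (Fin N) k M) (m : ℕ → M) (α : ℕ → k) (hα0 : α 0 ≠ 0)
    (hb : ∀ i : Fin N, m (i : ℕ) = b i)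
    (hx : ∀ i : ℕ, i + 1 < N → D.x • m i = m (i + 1))
    (hlast : D.x • m (N - 1) = ∑ j ∈ Finset.range n, α j • m (j * s)) :
    Function.Surjective (hsm k (M := M) D.x) := by
  rw [← LinearMap.range_eq_top, ← top_le_iff, ← b.span_eq, Submodule.span_le]
  rintro _ ⟨i, rfl⟩
  rw [SetLike.mem_coe, ← hb i]
  rcases Nat.eq_zero_or_pos (i : ℕ) with h0 | hpos
  · rw [h0]
    have hn' : n - 1 + 1 = n := Nat.succ_pred_eq_of_pos hn
    have hstep : ∀ j < n - 1, m ((j + 1) * s) = D.x • m ((j + 1) * s - 1) := by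
      intro j hj
      have h1 : 0 < (j + 1) * s := Nat.mul_pos (Nat.succ_pos j) hs0
      have h2 : (j + 1) * s - 1 + 1 = (j + 1) * s := Nat.succ_pred_eq_of_pos h1
      have h3 : (j + 1) * s < N := by
        rw [hN]; exact mul_lt_mul_of_pos_right (by omega) hs0
      rw [hx ((j + 1) * s - 1) (by rw [h2]; exact h3), h2]
    have hkey : D.x • (m (N - 1) - ∑ j ∈ Finset.range (n - 1), α (j + 1) • m ((j + 1) * s - 1))
        = α 0 • m 0 := by
      rw [smul_sub, Finset.smul_sum, hlast]
      have e1 : ∀ j ∈ Finset.range (n - 1),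
          D.x • (α (j + 1) • m ((j + 1) * s - 1)) = α (j + 1) • m ((j + 1) * s) := by
        intro j hj
        rw [smul_comm, ← hstep j (Finset.mem_range.mp hj)]
      rw [Finset.sum_congr rfl e1]
      have hsum : (∑ j ∈ Finset.range n, α j • m (j * s))
          = (∑ j ∈ Finset.range (n - 1), α (j + 1) • m ((j + 1) * s)) + α 0 • m (0 * s) := by
        conv_lhs => rw [← hn', Finset.sum_range_succ']
      rw [hsum, zero_mul]
      abel
    refine ⟨(α 0)⁻¹ • (m (N - 1) - ∑ j ∈ Finset.range (n - 1), α (j + 1) • m ((j + 1) * s - 1)), ?_⟩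
    rw [hsm_apply, smul_comm, hkey, smul_smul, inv_mul_cancel₀ hα0, one_smul]
  · obtain ⟨t, ht⟩ : ∃ t, (i : ℕ) = t + 1 := ⟨(i : ℕ) - 1, by omega⟩
    refine ⟨m t, ?_⟩
    rw [hsm_apply, hx t (by rw [← ht]; exact i.isLt), ← ht]

end Aux

/-- For `|χ| = s < ∞`, characters `λ₁, λ₂` and monic irreducible `f₁, f₂ ≠ y`,
`V(λ₁,f₁) ≅ V(λ₂,f₂)` iff `λ₁λ₂⁻¹ ∈ ⟨χ⟩` and `f₁ = f₂`. -/
theorem vlamf_iso_iff (D : HopfOreExt k G H) (s : ℕ)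
    (hs : orderOf D.χ = s) (hs0 : 0 < s)
    (lam₁ lam₂ : G →* kˣ) (f₁ f₂ : Polynomial k)
    (hmonic₁ : f₁.Monic) (hirr₁ : Irreducible f₁) (hfX₁ : f₁ ≠ Polynomial.X)
    (hmonic₂ : f₂.Monic) (hirr₂ : Irreducible f₂) (hfX₂ : f₂ ≠ Polynomial.X)
    (M₁ M₂ : Type*) [AddCommGroup M₁] [Module k M₁] [Module H M₁] [IsScalarTower k H M₁]
    [AddCommGroup M₂] [Module k M₂] [Module H M₂] [IsScalarTower k H M₂]
    (h₁ : IsVLamF D lam₁ s f₁ M₁) (h₂ : IsVLamF D lam₂ s f₂ M₂) :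
    Nonempty (M₁ ≃ₗ[H] M₂) ↔ (lam₁ * lam₂⁻¹ ∈ Subgroup.zpowers D.χ ∧ f₁ = f₂) := by
  obtain ⟨b₁, m₁, hb₁, hg₁, hx₁, hl₁⟩ := h₁
  have hn₁ : 0 < f₁.natDegree := hirr₁.natDegree_pos
  have hn₂ : 0 < f₂.natDegree := hirr₂.natDegree_pos
  have hN₁ : 0 < f₁.natDegree * s := Nat.mul_pos hn₁ hs0
  have hjs₁ : ∀ j < f₁.natDegree, j * s < f₁.natDegree * s :=
    fun j hj => mul_lt_mul_of_pos_right hj hs0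
  constructor
  · rintro ⟨e⟩
    obtain ⟨b₂, m₂, hb₂, hg₂, hx₂, hl₂⟩ := h₂
    have hek : ∀ (c : k) (v : M₁), e (c • v) = c • e v := by
      intro c v
      rw [← algebraMap_smul H c v, map_smul, algebraMap_smul]
    haveI : FiniteDimensional k M₁ := Module.Basis.finiteDimensional_of_finite b₁
    let ek : M₁ ≃ₗ[k] M₂ :=
      { toFun := e, invFun := e.symm, left_inv := e.left_inv, right_inv := e.right_inv,
        map_add' := fun a b => map_add e a b, map_smul' := hek }
    have hfr : f₁.natDegree * s = f₂.natDegree * s := by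
      have h1 := Module.finrank_eq_card_basis b₁
      have h2 := Module.finrank_eq_card_basis b₂
      have h3 := ek.finrank_eq
      rw [h1, h2] at h3
      simpa using h3
    have hnn : f₁.natDegree = f₂.natDegree := Nat.eq_of_mul_eq_mul_right hs0 hfr
    constructor
    · -- weight argument
      have hwg : ∀ g : G, D.ι g • (e (m₁ 0)) = (lam₁ g : k) • (e (m₁ 0)) := by
        intro g
        rw [← map_smul e, hg₁ 0 hN₁ g, pow_zero, one_mul, hek]
      have hw0 : e (m₁ 0) ≠ 0 := by
        rw [show m₁ 0 = b₁ ⟨0, hN₁⟩ from hb₁ ⟨0, hN₁⟩]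
        simp only [ne_eq, LinearEquiv.map_eq_zero_iff]
        exact b₁.ne_zero _
      have hrep : e (m₁ 0) = ∑ i, b₂.repr (e (m₁ 0)) i • b₂ i := (b₂.sum_repr _).symm
      have hco : ∀ (g : G) (i : Fin (f₂.natDegree * s)),
          b₂.repr (e (m₁ 0)) i * ((D.χ g : k) ^ (i : ℕ) * (lam₂ g : k))
            = (lam₁ g : k) * b₂.repr (e (m₁ 0)) i := by
        intro g i
        have h1 : D.ι g • (e (m₁ 0)) = ∑ i, (b₂.repr (e (m₁ 0)) i *
            ((D.χ g : k) ^ (i : ℕ) * (lam₂ g : k))) • b₂ i := by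
          conv_lhs => rw [hrep]
          rw [Finset.smul_sum]
          refine Finset.sum_congr rfl fun i _ => ?_
          rw [smul_comm, ← hb₂ i, hg₂ (i : ℕ) i.isLt g, smul_smul, hb₂ i]
        have h2 : D.ι g • (e (m₁ 0)) = ∑ i, ((lam₁ g : k) * b₂.repr (e (m₁ 0)) i) • b₂ i := by
          rw [hwg g]
          conv_lhs => rw [hrep]
          rw [Finset.smul_sum]
          refine Finset.sum_congr rfl fun i _ => ?_
          rw [smul_smul]
        have h3 : ∑ i, ((b₂.repr (e (m₁ 0)) i * ((D.χ g : k) ^ (i : ℕ) * (lam₂ g : k)))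
            - (lam₁ g : k) * b₂.repr (e (m₁ 0)) i) • b₂ i = 0 := by
          simp only [sub_smul]
          rw [Finset.sum_sub_distrib, ← h1, ← h2, sub_self]
        have h4 := Fintype.linearIndependent_iff.mp b₂.linearIndependent _ h3 i
        exact sub_eq_zero.mp h4
      obtain ⟨i0, hi0⟩ : ∃ i, b₂.repr (e (m₁ 0)) i ≠ 0 := by
        by_contra hc
        push_neg at hc
        apply hw0
        rw [hrep]
        simp [hc]
      have hgi : ∀ g : G, (D.χ g : k) ^ (i0 : ℕ) * (lam₂ g : k) = (lam₁ g : k) := by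
        intro g
        have h5 := hco g i0
        rw [mul_comm ((lam₁ g : k))] at h5
        exact mul_left_cancel₀ hi0 h5
      refine ⟨((i0 : ℕ) : ℤ), ?_⟩
      show D.χ ^ (((i0 : ℕ)) : ℤ) = lam₁ * lam₂⁻¹
      rw [zpow_natCast (G := G →* kˣ)]
      ext g
      simp only [MonoidHom.pow_apply, MonoidHom.mul_apply, MonoidHom.inv_apply,
        Units.val_pow_eq_pow_val, Units.val_mul, Units.val_inv_eq_inv_val]
      rw [← hgi g, mul_inv_cancel_right₀ (Units.ne_zero (lam₂ g))]
    · -- f₁ = f₂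
      have hjs₂ : ∀ j < f₂.natDegree, j * s < f₂.natDegree * s :=
        fun j hj => mul_lt_mul_of_pos_right hj hs0
      have hall₂ := m_xN_all D (Nat.mul_pos hn₂ hs0) hjs₂ b₂ m₂
        (fun j => -(f₂.coeff j)) hb₂ hx₂ hl₂
      rw [← hnn] at hall₂
      have h1 := m_xN D hN₁ hjs₁ m₁ (fun j => -(f₁.coeff j)) hx₁ hl₁
      have h2 : D.x ^ (f₁.natDegree * s) • m₁ 0
          = ∑ j ∈ Finset.range f₁.natDegree, (-(f₂.coeff j)) • (D.x ^ (j * s) • m₁ 0) := by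
        apply e.injective
        rw [map_smul, hall₂ (e (m₁ 0)), map_sum]
        refine Finset.sum_congr rfl fun j hj => ?_
        rw [hek, map_smul]
      have h3 : ∑ j ∈ Finset.range f₁.natDegree,
          ((-(f₁.coeff j)) - (-(f₂.coeff j))) • (D.x ^ (j * s) • m₁ 0) = 0 := by
        simp only [sub_smul]
        rw [Finset.sum_sub_distrib, ← h1, ← h2, sub_self]
      have hinj : Function.Injective (fun j : Fin f₁.natDegree =>
          (⟨(j : ℕ) * s, hjs₁ (j : ℕ) j.isLt⟩ : Fin (f₁.natDegree * s))) := by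
        intro a b hab
        apply Fin.ext
        exact Nat.eq_of_mul_eq_mul_right hs0 (congrArg Fin.val hab)
      have hli := b₁.linearIndependent.comp _ hinj
      have h3' : ∑ j ∈ Finset.range f₁.natDegree,
          ((-(f₁.coeff j)) - (-(f₂.coeff j))) • m₁ (j * s) = 0 := by
        calc ∑ j ∈ Finset.range f₁.natDegree, ((-(f₁.coeff j)) - (-(f₂.coeff j))) • m₁ (j * s)
            = ∑ j ∈ Finset.range f₁.natDegree,
              ((-(f₁.coeff j)) - (-(f₂.coeff j))) • (D.x ^ (j * s) • m₁ 0) :=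
              Finset.sum_congr rfl fun j hj => by
                rw [m_pow_smul D m₁ hx₁ (j * s) (hjs₁ j (Finset.mem_range.mp hj))]
          _ = 0 := h3
      have h5 : ∀ j : Fin f₁.natDegree, (-(f₁.coeff (j : ℕ))) - (-(f₂.coeff (j : ℕ))) = 0 := by
        refine Fintype.linearIndependent_iff.mp hli _ ?_
        calc ∑ j : Fin f₁.natDegree, ((-(f₁.coeff (j : ℕ))) - (-(f₂.coeff (j : ℕ)))) •
              (⇑b₁ ∘ fun j : Fin f₁.natDegree =>
                (⟨(j : ℕ) * s, hjs₁ (j : ℕ) j.isLt⟩ : Fin (f₁.natDegree * s))) j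
            = ∑ j : Fin f₁.natDegree,
              ((-(f₁.coeff (j : ℕ))) - (-(f₂.coeff (j : ℕ)))) • m₁ ((j : ℕ) * s) :=
              Finset.sum_congr rfl fun j _ => by
                rw [Function.comp_apply, ← hb₁ ⟨(j : ℕ) * s, hjs₁ (j : ℕ) j.isLt⟩]
          _ = ∑ j ∈ Finset.range f₁.natDegree,
              ((-(f₁.coeff j)) - (-(f₂.coeff j))) • m₁ (j * s) :=
              Fin.sum_univ_eq_sum_range
                (fun t => ((-(f₁.coeff t)) - (-(f₂.coeff t))) • m₁ (t * s)) f₁.natDegree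
          _ = 0 := h3'
      have hco : ∀ t : ℕ, t < f₁.natDegree → f₁.coeff t = f₂.coeff t := by
        intro t ht
        have := h5 ⟨t, ht⟩
        simp only [sub_eq_zero, neg_inj] at this
        exact this
      ext t
      rcases lt_trichotomy t f₁.natDegree with h | h | h
      · exact hco t h
      · rw [h, hmonic₁.coeff_natDegree, hnn, hmonic₂.coeff_natDegree]
      · rw [Polynomial.coeff_eq_zero_of_natDegree_lt h,
          Polynomial.coeff_eq_zero_of_natDegree_lt (hnn ▸ h)]
  · rintro ⟨hmem, rfl⟩
    obtain ⟨b₂, m₂, hb₂, hg₂, hx₂, hl₂⟩ := h₂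
    obtain ⟨z, hz⟩ := Subgroup.mem_zpowers_iff.mp hmem
    have hsz : ((s : ℤ)) ≠ 0 := by exact_mod_cast hs0.ne'
    have hχr : D.χ ^ ((z % (s : ℤ)).toNat) = lam₁ * lam₂⁻¹ := by
      rw [← zpow_natCast (G := G →* kˣ), Int.toNat_of_nonneg (Int.emod_nonneg z hsz), ← hs,
        zpow_mod_orderOf]
      exact hz
    set r : ℕ := (z % (s : ℤ)).toNat with hr
    have hlam : ∀ g : G, (lam₁ g : k) = (D.χ g : k) ^ r * (lam₂ g : k) := by
      intro g
      have h1 : (D.χ g) ^ r = lam₁ g * (lam₂ g)⁻¹ := by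
        have := congrArg (fun φ : G →* kˣ => φ g) hχr
        simpa using this
      have h2 : (D.χ g) ^ r * lam₂ g = lam₁ g := by rw [h1, inv_mul_cancel_right]
      have h3 := congrArg (Units.val) h2
      rw [Units.val_mul, Units.val_pow_eq_pow_val] at h3
      exact h3.symm
    have hα0 : -(f₁.coeff 0) ≠ 0 := by
      rw [neg_ne_zero]
      intro h0
      obtain ⟨q, hq⟩ := Polynomial.X_dvd_iff.mpr h0
      rcases hirr₁.isUnit_or_isUnit hq with hu | hu
      · exact Polynomial.not_isUnit_X hu
      · obtain ⟨c, hc, hcq⟩ := Polynomial.isUnit_iff.mp hu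
        apply hfX₁
        have hc1 : c = 1 := by
          have hm := hmonic₁
          rw [Polynomial.Monic, hq, ← hcq, Polynomial.leadingCoeff_mul,
            Polynomial.leadingCoeff_X, one_mul, Polynomial.leadingCoeff_C] at hm
          exact hm
        rw [hq, ← hcq, hc1, Polynomial.C_1, mul_one]
    haveI : FiniteDimensional k M₂ := Module.Basis.finiteDimensional_of_finite b₂
    have hsurj : Function.Surjective (hsm k (M := M₂) D.x) :=
      x_smul_surjective D hn₁ hs0 rfl b₂ m₂ (fun j => -(f₁.coeff j)) hα0 hb₂ hx₂ hl₂
    have hbij : Function.Bijective (hsm k (M := M₂) D.x) :=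
      ⟨(LinearMap.injective_iff_surjective).mpr hsurj, hsurj⟩
    have hbijr : ∀ t : ℕ, Function.Bijective ((hsm k (M := M₂) D.x) ^ t) := by
      intro t
      induction t with
      | zero =>
        rw [pow_zero]
        exact (by simpa [Module.End.one_eq_id] using Function.bijective_id)
      | succ t ih =>
        rw [pow_succ, Module.End.mul_eq_comp, LinearMap.coe_comp]
        exact ih.comp hbij
    let eL : M₂ ≃ₗ[k] M₂ := LinearEquiv.ofBijective _ (hbijr r)
    let φ : M₁ ≃ₗ[k] M₂ := (b₁.equiv b₂ (Equiv.refl _)).trans eL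
    have hφn : ∀ t : ℕ, t < f₁.natDegree * s → φ (m₁ t) = D.x ^ r • m₂ t := by
      intro t ht
      have h1 : φ (b₁ ⟨t, ht⟩) = ((hsm k (M := M₂) D.x) ^ r) (b₂ ⟨t, ht⟩) := by
        simp [φ, eL, Module.Basis.equiv_apply, LinearEquiv.ofBijective_apply]
      rw [show m₁ t = b₁ ⟨t, ht⟩ from hb₁ ⟨t, ht⟩, h1, hsm_pow_apply,
        show (b₂ ⟨t, ht⟩ : M₂) = m₂ t from (hb₂ ⟨t, ht⟩).symm]
    have hxφ : ∀ v : M₁, φ (D.x • v) = D.x • φ v := by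
      have heq : (φ : M₁ →ₗ[k] M₂).comp (hsm k D.x)
          = (hsm k D.x).comp (φ : M₁ →ₗ[k] M₂) := by
        apply b₁.ext
        intro i
        simp only [LinearMap.coe_comp, Function.comp_apply, hsm_apply, LinearEquiv.coe_coe]
        rw [← hb₁ i]
        by_cases hi2 : (i : ℕ) + 1 < f₁.natDegree * s
        · rw [hx₁ (i : ℕ) hi2, hφn ((i : ℕ) + 1) hi2, hφn (i : ℕ) i.isLt,
            ← hx₂ (i : ℕ) hi2, ← mul_smul, ← mul_smul, pow_mul_comm']
        · have hiN : (i : ℕ) = f₁.natDegree * s - 1 := by have := i.isLt; omega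
          rw [hiN, hl₁, map_sum]
          simp only [map_smul]
          rw [Finset.sum_congr rfl (fun j hj => by
              rw [hφn (j * s) (hjs₁ j (Finset.mem_range.mp hj))]),
            hφn (f₁.natDegree * s - 1) (by omega),
            show D.x • D.x ^ r • m₂ (f₁.natDegree * s - 1)
                = D.x ^ r • (D.x • m₂ (f₁.natDegree * s - 1)) from by
              rw [← mul_smul, ← mul_smul, pow_mul_comm'],
            hl₂, Finset.smul_sum]
          exact Finset.sum_congr rfl fun j hj => smul_comm _ _ _
      intro v
      simpa using LinearMap.congr_fun heq v
    have hgφ : ∀ (g : G) (v : M₁), φ (D.ι g • v) = D.ι g • φ v := by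
      intro g
      have heq : (φ : M₁ →ₗ[k] M₂).comp (hsm k (D.ι g))
          = (hsm k (D.ι g)).comp (φ : M₁ →ₗ[k] M₂) := by
        apply b₁.ext
        intro i
        simp only [LinearMap.coe_comp, Function.comp_apply, hsm_apply, LinearEquiv.coe_coe]
        rw [← hb₁ i, hg₁ (i : ℕ) i.isLt g, map_smul, hφn (i : ℕ) i.isLt]
        conv_rhs => rw [← mul_smul, iota_mul_pow D g r, smul_assoc, mul_smul,
          hg₂ (i : ℕ) i.isLt g]
        rw [← smul_comm ((D.χ g : k) ^ (i : ℕ) * (lam₂ g : k)) (D.x ^ r), smul_smul, hlam g]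
        congr 1
        ring
      intro v
      simpa using LinearMap.congr_fun heq v
    have hxtφ : ∀ (t : ℕ) (v : M₁), φ (D.x ^ t • v) = D.x ^ t • φ v := by
      intro t
      induction t with
      | zero => intro v; simp
      | succ t ih =>
        intro v
        rw [pow_succ', mul_smul, hxφ, ih, ← mul_smul, ← pow_succ']
    have hall : ∀ (h : H) (v : M₁), φ (h • v) = h • φ v := by
      intro h
      have hmem' : h ∈ Submodule.span k (Set.range D.bas) := by
        rw [D.bas.span_eq]; trivial
      refine Submodule.span_induction (p := fun y _ => ∀ v : M₁, φ (y • v) = y • φ v)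
        ?_ ?_ ?_ ?_ hmem'
      · rintro _ ⟨⟨g, j⟩, rfl⟩ v
        rw [D.bas_eq, mul_smul, hgφ, hxtφ, mul_smul]
      · intro v; simp
      · intro y z _ _ hy hz v
        rw [add_smul, map_add, hy, hz, add_smul]
      · intro c y _ hy v
        rw [smul_assoc, map_smul, hy, smul_assoc]
    exact ⟨{ toFun := φ, map_add' := fun a b => map_add φ a b,
             map_smul' := hall, invFun := φ.symm,
             left_inv := φ.left_inv, right_inv := φ.right_inv }⟩
end
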